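/- arXiv:2407.15654 — 5 statements merged into one kernel-verified Lean document; each statement's English description precedes it below -/
import Mathlib

section
/- Let n ≥ 1, let (q_α)_{α∈ℕ₀ⁿ} be polynomials in ℝ[x₁,…,xₙ], let y ∈ ℝⁿ, and let μ be a measure on ℝⁿ such that every monomial x^α is μ-integrable and ∫ x^α dμ(x) = α!·q_α(y) for all α ∈ ℕ₀ⁿ. Then for every polynomial f ∈ ℝ[x₁,…,xₙ] one has Σ_{α∈ℕ₀ⁿ} q_α(y)·(∂^α f)(y) = ∫_{ℝⁿ} f(x+y) dμ(x). -/
open MeasureTheory MvPolynomial Filter Topology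

/-- The iterated partial derivative `∂^α` on `ℝ[x₁,…,xₙ]`. -/
noncomputable def pd (n : ℕ) (α : Fin n →₀ ℕ) :
    MvPolynomial (Fin n) ℝ →ₗ[ℝ] MvPolynomial (Fin n) ℝ :=
  (List.ofFn (fun i : Fin n =>
    (((MvPolynomial.pderiv i).toLinearMap : Module.End ℝ (MvPolynomial (Fin n) ℝ)) ^ (α i)))).prod

/-- The multi-factorial `α! = α₁!⋯αₙ!`. -/
def mfact (n : ℕ) (α : Fin n →₀ ℕ) : ℕ := ∏ i, Nat.factorial (α i)

/-- The monomial function `x ↦ x^α`. -/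
def monomialFn (n : ℕ) (α : Fin n →₀ ℕ) : (Fin n → ℝ) → ℝ := fun x => ∏ i, x i ^ α i

/-- `s` is a `K`-moment sequence: there is a measure supported in `K` whose moments are `s`. -/
def IsMomentSeqOn (n : ℕ) (K : Set (Fin n → ℝ)) (s : (Fin n →₀ ℕ) → ℝ) : Prop :=
  ∃ μ : Measure (Fin n → ℝ), μ Kᶜ = 0 ∧
    ∀ α : Fin n →₀ ℕ, Integrable (monomialFn n α) μ ∧ (∫ x, monomialFn n α x ∂μ) = s α

/-- `Pos(K)`, the polynomials nonnegative on `K`. -/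
def PosOn (n : ℕ) (K : Set (Fin n → ℝ)) : Set (MvPolynomial (Fin n) ℝ) :=
  {f | ∀ x ∈ K, 0 ≤ MvPolynomial.eval x f}

/-- The operator `T = Σ_α q_α ∂^α` applied to `p` (the sum is finite since `∂^α p = 0`
for `|α| > deg p`). -/
noncomputable def applyOp (n : ℕ) (q : (Fin n →₀ ℕ) → MvPolynomial (Fin n) ℝ)
    (p : MvPolynomial (Fin n) ℝ) : MvPolynomial (Fin n) ℝ :=
  ∑ᶠ α : Fin n →₀ ℕ, q α * pd n α p

/-- `K^♯ = {x : x + K ⊆ K}`. -/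
def Ksharp (n : ℕ) (K : Set (Fin n → ℝ)) : Set (Fin n → ℝ) :=
  {x | ∀ y ∈ K, x + y ∈ K}

/-- `D(s) = Σ_α (s_α/α!) ∂^α` applied to `p`. -/
noncomputable def applyD (n : ℕ) (s : (Fin n →₀ ℕ) → ℝ) (p : MvPolynomial (Fin n) ℝ) :
    MvPolynomial (Fin n) ℝ :=
  ∑ᶠ α : Fin n →₀ ℕ, (s α / (mfact n α : ℝ)) • pd n α p

/-- The exponential of an endomorphism of a finite-dimensional real vector space,
defined via the matrix exponential in a basis. -/
noncomputable def expEnd {M : Type*} [AddCommGroup M] [Module ℝ M] [FiniteDimensional ℝ M]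
    (f : M →ₗ[ℝ] M) : M →ₗ[ℝ] M :=
  letI : DecidableEq (Module.Basis.ofVectorSpaceIndex ℝ M) := Classical.decEq _
  (Matrix.toLin (Module.Basis.ofVectorSpace ℝ M) (Module.Basis.ofVectorSpace ℝ M))
    (NormedSpace.exp
      ((LinearMap.toMatrix (Module.Basis.ofVectorSpace ℝ M) (Module.Basis.ofVectorSpace ℝ M)) f))

/-!
Shifting by `y` turns the claim into a statement about `g(X) = f(X + y)`. By Taylor's formula
`(∂^α f)(y) = (∂^α g)(0) = α! · [X^α] g`, so the left-hand side is `Σ_α [X^α] g · ∫ x^α dμ`,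
which is `∫ g dμ` by linearity of the integral.
-/

namespace MvPolynomial

variable {σ R : Type*} [CommSemiring R]

theorem coeff_pderiv_iterate (i : σ) (k : ℕ) (p : MvPolynomial σ R) (m : σ →₀ ℕ) :
    coeff m ((pderiv i)^[k] p) =
      coeff (m + Finsupp.single i k) p * ((m i + k).descFactorial k : R) := by
  induction k generalizing m with
  | zero => simp
  | succ k ih =>
    rw [Function.iterate_succ_apply', coeff_pderiv, ih, Finsupp.add_apply,
      Finsupp.single_eq_same, add_assoc, ← Finsupp.single_add, mul_assoc,
      add_comm 1 k, Nat.descFactorial_succ, show m i + (k + 1) - k = m i + 1 by omega,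
      show m i + 1 + k = m i + (k + 1) by omega]
    push_cast
    ring

theorem coeff_list_prod_pderiv_pow (α : σ →₀ ℕ) {l : List σ} (hl : l.Nodup)
    (p : MvPolynomial σ R) (m : σ →₀ ℕ) :
    coeff m ((l.map fun i =>
        ((pderiv i).toLinearMap : Module.End R (MvPolynomial σ R)) ^ α i).prod p) =
      coeff (m + (l.map fun i => Finsupp.single i (α i)).sum) p *
        (l.map fun i => ((m i + α i).descFactorial (α i) : R)).prod := by
  induction l generalizing m with
  | nil => simp
  | cons a l ih =>
    obtain ⟨ha, hl⟩ := List.nodup_cons.mp hl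
    have hm : ∀ i ∈ l, (((m + Finsupp.single a (α a)) i + α i).descFactorial (α i) : R) =
        (m i + α i).descFactorial (α i) := fun i hi => by
      rw [Finsupp.add_apply, Finsupp.single_eq_of_ne (by rintro rfl; exact ha hi), add_zero]
    simp only [List.map_cons, List.prod_cons, List.sum_cons, Module.End.mul_apply]
    rw [Module.End.pow_apply, Derivation.coeFn_coe, coeff_pderiv_iterate, ih hl,
      List.map_congr_left hm, add_assoc]
    ring

noncomputable def shift (y : σ → R) : MvPolynomial σ R →ₐ[R] MvPolynomial σ R :=
  aeval fun i => X i + C (y i)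

theorem eval_shift (x y : σ → R) (f : MvPolynomial σ R) :
    eval x (shift y f) = eval (x + y) f := by
  induction f using MvPolynomial.induction_on <;> simp_all [shift]

theorem pderiv_shift (y : σ → R) (i : σ) (f : MvPolynomial σ R) :
    pderiv i (shift y f) = shift y (pderiv i f) := by
  induction f using MvPolynomial.induction_on with
  | C a => simp [shift]
  | add p q hp hq => simp only [map_add, hp, hq]
  | mul_X p j hp =>
    rw [map_mul, pderiv_mul, hp, pderiv_mul, map_add, map_mul, map_mul]
    rcases eq_or_ne j i with rfl | hji
    · simp [shift]
    · simp [shift, pderiv_X_of_ne hji]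

theorem commute_shift_pderiv (y : σ → R) (i : σ) :
    Commute ((shift y).toLinearMap : Module.End R (MvPolynomial σ R)) (pderiv i).toLinearMap :=
  LinearMap.ext fun f => (pderiv_shift y i f).symm

end MvPolynomial

theorem coeff_zero_pd {n : ℕ} (α : Fin n →₀ ℕ) (p : MvPolynomial (Fin n) ℝ) :
    coeff 0 (pd n α p) = mfact n α * coeff α p := by
  rw [pd, List.ofFn_eq_map, coeff_list_prod_pderiv_pow α (List.nodup_finRange n),
    ← List.ofFn_eq_map, List.sum_ofFn, Finsupp.univ_sum_single, ← List.ofFn_eq_map,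
    List.prod_ofFn, mfact]
  simp [Nat.descFactorial_self, mul_comm]

theorem pd_shift {n : ℕ} (α : Fin n →₀ ℕ) (y : Fin n → ℝ) (f : MvPolynomial (Fin n) ℝ) :
    pd n α (shift y f) = shift y (pd n α f) := by
  have : Commute ((shift y).toLinearMap : Module.End ℝ _) (pd n α) := by
    refine Commute.list_prod_right _ _ fun g hg => ?_
    obtain ⟨i, rfl⟩ := List.mem_ofFn.mp hg
    exact (commute_shift_pderiv y i).pow_right _
  exact (LinearMap.congr_fun this f).symm

theorem eval_pd_eq_mfact_mul_coeff_shift {n : ℕ} (α : Fin n →₀ ℕ) (y : Fin n → ℝ)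
    (f : MvPolynomial (Fin n) ℝ) :
    eval y (pd n α f) = mfact n α * coeff α (shift y f) := by
  rw [← zero_add y, ← eval_shift, ← pd_shift, eval_zero, constantCoeff_eq, coeff_zero_pd,
    zero_add]

theorem integral_eval_eq_sum_coeff_mul_integral_monomialFn {n : ℕ} {μ : Measure (Fin n → ℝ)}
    (hμ : ∀ α, Integrable (monomialFn n α) μ) (g : MvPolynomial (Fin n) ℝ) :
    ∫ x, eval x g ∂μ = ∑ α ∈ g.support, coeff α g * ∫ x, monomialFn n α x ∂μ := by
  simp_rw [eval_eq', ← integral_const_mul]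
  exact integral_finsetSum _ fun α _ => (hμ α).const_mul _

theorem stmt1_general (n : ℕ) (q : (Fin n →₀ ℕ) → MvPolynomial (Fin n) ℝ)
    (y : Fin n → ℝ) (μ : Measure (Fin n → ℝ))
    (hμ : ∀ α : Fin n →₀ ℕ, Integrable (monomialFn n α) μ ∧
      (∫ x, monomialFn n α x ∂μ) = (mfact n α : ℝ) * MvPolynomial.eval y (q α)) :
    ∀ f : MvPolynomial (Fin n) ℝ,
      (∑ᶠ α : Fin n →₀ ℕ,
        MvPolynomial.eval y (q α) * MvPolynomial.eval y (pd n α f)) =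
      ∫ x, MvPolynomial.eval (x + y) f ∂μ := by
  intro f
  have hsupp : (Function.support fun α => eval y (q α) * eval y (pd n α f)) ⊆
      (shift y f).support := fun α hα => by
    contrapose! hα
    rw [Function.notMem_support, eval_pd_eq_mfact_mul_coeff_shift,
      notMem_support_iff.mp hα, mul_zero, mul_zero]
  simp_rw [finsum_eq_sum_of_support_subset _ hsupp, ← eval_shift,
    integral_eval_eq_sum_coeff_mul_integral_monomialFn fun α => (hμ α).1]
  refine Finset.sum_congr rfl fun α _ => ?_
  rw [eval_pd_eq_mfact_mul_coeff_shift, (hμ α).2]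
  ring

/-- if `μ` represents the moments `α!·q_α(y)`, then
`Σ_α q_α(y)·(∂^α f)(y) = ∫ f(x+y) dμ(x)` for every polynomial `f`. -/
theorem stmt1 (n : ℕ) (hn : 1 ≤ n) (q : (Fin n →₀ ℕ) → MvPolynomial (Fin n) ℝ)
    (y : Fin n → ℝ) (μ : Measure (Fin n → ℝ))
    (hμ : ∀ α : Fin n →₀ ℕ, Integrable (monomialFn n α) μ ∧
      (∫ x, monomialFn n α x ∂μ) = (mfact n α : ℝ) * MvPolynomial.eval y (q α)) :
    ∀ f : MvPolynomial (Fin n) ℝ,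
      (∑ᶠ α : Fin n →₀ ℕ,
        MvPolynomial.eval y (q α) * MvPolynomial.eval y (pd n α f)) =
      ∫ x, MvPolynomial.eval (x + y) f ∂μ :=
  stmt1_general n q y μ hμ
end

section
/- Let n ≥ 1 and let (q_α)_{α∈ℕ₀ⁿ} be polynomials in ℝ[x₁,…,xₙ], and let T : ℝ[x₁,…,xₙ] → ℝ[x₁,…,xₙ] be the linear map Tp = Σ_α q_α·∂^α p. Then the following are equivalent: (i) deg q_α ≤ |α| for all α ∈ ℕ₀ⁿ; (ii) T maps ℝ[x₁,…,xₙ]_{≤d} into ℝ[x₁,…,xₙ]_{≤d} for every d ∈ ℕ₀. -/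
open MeasureTheory MvPolynomial Filter Topology

/-! On monomials, `∂^α x^β` is a multiple of `x^(β - α)` that vanishes unless `α ≤ β`, so `∂^α`
lowers the total degree by `|α|` and each term `q_α ∂^α p` has degree at most `deg p` once
`deg q_α ≤ |α|`. Conversely, `T x^α = α! q_α + Σ_{β < α} q_β ∂^β x^α`; by well-founded induction
on `α` the lower terms already have degree at most `|α|`, hence so does `α! q_α`. -/

namespace MvPolynomial

variable {σ R : Type*} [CommSemiring R]

theorem pderiv_pow_monomial (i : σ) (k : ℕ) (β : σ →₀ ℕ) (c : R) :
    (((pderiv i).toLinearMap : Module.End R (MvPolynomial σ R)) ^ k) (monomial β c) =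
      monomial (β - Finsupp.single i k) (c * (β i).descFactorial k) := by
  induction k with
  | zero => simp
  | succ k ih =>
    rw [pow_succ', Module.End.mul_apply, ih, Derivation.coeFn_coe, pderiv_monomial, tsub_tsub,
      ← Finsupp.single_add, Finsupp.tsub_apply, Finsupp.single_eq_same, Nat.descFactorial_succ,
      Nat.cast_mul, mul_comm ((β i - k : ℕ) : R), mul_assoc]

theorem list_prod_pderiv_pow_monomial [DecidableEq σ] (α β : σ →₀ ℕ) (c : R) {l : List σ}
    (hl : l.Nodup) :
    (l.map fun i => ((pderiv i).toLinearMap : Module.End R (MvPolynomial σ R)) ^ α i).prod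
        (monomial β c) =
      monomial (β - ∑ i ∈ l.toFinset, Finsupp.single i (α i))
        (c * ∏ i ∈ l.toFinset, (β i).descFactorial (α i)) := by
  induction l with
  | nil => simp
  | cons a l ih =>
    obtain ⟨ha, hl⟩ := List.nodup_cons.mp hl
    have ha' : a ∉ l.toFinset := by simpa using ha
    have hβa : (β - ∑ i ∈ l.toFinset, Finsupp.single i (α i)) a = β a := by
      simp [Finsupp.single_apply, ha]
    rw [List.map_cons, List.prod_cons, Module.End.mul_apply, ih hl, pderiv_pow_monomial, hβa,
      List.toFinset_cons, Finset.sum_insert ha', Finset.prod_insert ha', tsub_tsub, add_comm]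
    push_cast
    ring_nf

end MvPolynomial

open Finsupp (degree)

section

variable {n : ℕ}

theorem pd_monomial (α β : Fin n →₀ ℕ) (c : ℝ) :
    pd n α (monomial β c) = monomial (β - α) (c * ∏ i, (β i).descFactorial (α i)) := by
  rw [pd, List.ofFn_eq_map, list_prod_pderiv_pow_monomial _ _ _ (List.nodup_finRange n),
    List.toFinset_finRange, Finsupp.univ_sum_single]

theorem pd_monomial_self (α : Fin n →₀ ℕ) : pd n α (monomial α 1) = C (mfact n α : ℝ) := by
  simp [pd_monomial, mfact, Nat.descFactorial_self]

theorem le_of_pd_monomial_ne_zero {α β : Fin n →₀ ℕ} {c : ℝ} (h : pd n α (monomial β c) ≠ 0) :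
    α ≤ β := by
  intro i
  by_contra! hi
  refine h ?_
  rw [pd_monomial, Finset.prod_eq_zero (Finset.mem_univ i)
    (Nat.descFactorial_eq_zero_iff_lt.mpr hi), Nat.cast_zero, mul_zero, map_zero]

theorem coeff_pd (α γ : Fin n →₀ ℕ) (p : MvPolynomial (Fin n) ℝ) :
    coeff γ (pd n α p) = coeff (γ + α) p * ∏ i, ((γ + α) i).descFactorial (α i) := by
  induction p using MvPolynomial.induction_on' with
  | add p q hp hq => simp [coeff_add, hp, hq, add_mul]
  | monomial β c =>
    rw [pd_monomial, coeff_monomial, coeff_monomial]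
    by_cases hβ : β = γ + α
    · subst hβ
      simp
    rw [if_neg hβ, zero_mul, ite_eq_right_iff]
    rintro rfl
    obtain ⟨i, hi⟩ : ∃ i, β i < α i := by
      by_contra! hαβ
      exact hβ (tsub_add_cancel_of_le fun i => hαβ i).symm
    rw [Finset.prod_eq_zero (Finset.mem_univ i) (Nat.descFactorial_eq_zero_iff_lt.mpr hi),
      Nat.cast_zero, mul_zero]

theorem totalDegree_pd_add_degree_le {α : Fin n →₀ ℕ} {p : MvPolynomial (Fin n) ℝ}
    (h : pd n α p ≠ 0) : (pd n α p).totalDegree + degree α ≤ p.totalDegree := by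
  obtain ⟨γ, hγ, hdeg⟩ := Finset.exists_mem_eq_sup _ (support_nonempty.mpr h) degree
  have hγα : γ + α ∈ p.support := by
    rw [mem_support_iff, coeff_pd] at hγ
    exact mem_support_iff.mpr (left_ne_zero_of_mul hγ)
  calc (pd n α p).totalDegree + degree α = degree (γ + α) := by
        rw [map_add, ← hdeg]; rfl
    _ ≤ p.totalDegree := le_totalDegree hγα

theorem totalDegree_mul_pd_le {r : MvPolynomial (Fin n) ℝ} {α : Fin n →₀ ℕ}
    (hr : r.totalDegree ≤ degree α) (p : MvPolynomial (Fin n) ℝ) :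
    (r * pd n α p).totalDegree ≤ p.totalDegree := by
  by_cases h : pd n α p = 0
  · simp [h]
  calc (r * pd n α p).totalDegree ≤ r.totalDegree + (pd n α p).totalDegree := totalDegree_mul _ _
    _ ≤ (pd n α p).totalDegree + degree α := by omega
    _ ≤ p.totalDegree := totalDegree_pd_add_degree_le h

theorem applyOp_eq_sum (q : (Fin n →₀ ℕ) → MvPolynomial (Fin n) ℝ) {p : MvPolynomial (Fin n) ℝ}
    {s : Finset (Fin n →₀ ℕ)} (hs : ∀ α, pd n α p ≠ 0 → α ∈ s) :
    applyOp n q p = ∑ α ∈ s, q α * pd n α p :=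
  finsum_eq_sum_of_support_subset _ fun α hα => hs α (right_ne_zero_of_mul hα)

theorem totalDegree_applyOp_le {q : (Fin n →₀ ℕ) → MvPolynomial (Fin n) ℝ}
    (hq : ∀ α, (q α).totalDegree ≤ degree α) (p : MvPolynomial (Fin n) ℝ) :
    (applyOp n q p).totalDegree ≤ p.totalDegree := by
  have hfin := Finsupp.finite_of_degree_le (σ := Fin n) p.totalDegree
  rw [applyOp_eq_sum q (s := hfin.toFinset) fun α h =>
    hfin.mem_toFinset.mpr (le_of_add_le_right (totalDegree_pd_add_degree_le h))]
  exact totalDegree_finsetSum_le fun α _ => totalDegree_mul_pd_le (hq α) p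

theorem totalDegree_le_of_applyOp_monomial {q : (Fin n →₀ ℕ) → MvPolynomial (Fin n) ℝ}
    {α : Fin n →₀ ℕ} (hlt : ∀ β < α, (q β).totalDegree ≤ degree β)
    (hα : (applyOp n q (monomial α 1)).totalDegree ≤ degree α) :
    (q α).totalDegree ≤ degree α := by
  have hx : (monomial α (1 : ℝ)).totalDegree = degree α := totalDegree_monomial _ one_ne_zero
  have hsplit : applyOp n q (monomial α 1) =
      (mfact n α : ℝ) • q α + ∑ β ∈ Finset.Iio α, q β * pd n β (monomial α 1) := by
    rw [applyOp_eq_sum q fun β h => Finset.mem_Iic.mpr (le_of_pd_monomial_ne_zero h),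
      ← Finset.add_sum_Iio_eq_sum_Iic, pd_monomial_self, mul_comm, C_mul']
  have hlower : (∑ β ∈ Finset.Iio α, q β * pd n β (monomial α 1)).totalDegree ≤ degree α :=
    totalDegree_finsetSum_le fun β hβ =>
      hx ▸ totalDegree_mul_pd_le (hlt β (Finset.mem_Iio.mp hβ)) _
  have hfact : (mfact n α : ℝ) ≠ 0 := Nat.cast_ne_zero.mpr (Finset.prod_ne_zero_iff.mpr
    fun i _ => Nat.factorial_ne_zero _)
  calc (q α).totalDegree = ((mfact n α : ℝ) • q α).totalDegree := by
        rw [totalDegree, totalDegree, support_smul_eq hfact]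
    _ ≤ degree α := by
      rw [eq_sub_of_add_eq hsplit.symm]
      exact (totalDegree_sub _ _).trans (max_le hα hlower)

end

theorem stmt4_general (n : ℕ) (q : (Fin n →₀ ℕ) → MvPolynomial (Fin n) ℝ) :
    (∀ α : Fin n →₀ ℕ, (q α).totalDegree ≤ ∑ i, α i) ↔
      ∀ d : ℕ, ∀ p : MvPolynomial (Fin n) ℝ, p.totalDegree ≤ d →
        (applyOp n q p).totalDegree ≤ d := by
  simp only [← Finsupp.degree_eq_sum]
  refine ⟨fun hq d p hp => (totalDegree_applyOp_le hq p).trans hp, fun hT α => ?_⟩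
  induction α using WellFoundedLT.induction with
  | _ α ih =>
    exact totalDegree_le_of_applyOp_monomial ih (hT _ _ (totalDegree_monomial _ one_ne_zero).le)

/-- Lemma `degreePreserving`: `T = Σ_α q_α ∂^α` maps each
`ℝ[x₁,…,xₙ]_{≤d}` into itself iff `deg q_α ≤ |α|` for all `α`. -/
theorem stmt4 (n : ℕ) (hn : 1 ≤ n) (q : (Fin n →₀ ℕ) → MvPolynomial (Fin n) ℝ) :
    (∀ α : Fin n →₀ ℕ, (q α).totalDegree ≤ ∑ i, α i) ↔
      ∀ d : ℕ, ∀ p : MvPolynomial (Fin n) ℝ, p.totalDegree ≤ d →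
        (applyOp n q p).totalDegree ≤ d :=
  stmt4_general n q
end

section
/- Let n ≥ 1 and let K ⊆ ℝⁿ be a nonempty compact set. Let (c_α)_{α∈ℕ₀ⁿ} be real numbers and let T : ℝ[x₁,…,xₙ] → ℝ[x₁,…,xₙ] be the linear map Tp = Σ_α c_α·∂^α p. If T(Pos(K)) ⊆ Pos(K), then there is c ≥ 0 such that T = c·id; equivalently, c_0 ≥ 0 and c_α = 0 for all α ≠ 0. -/
open MeasureTheory MvPolynomial Filter Topology

/-!
Fix `u ∈ ℝⁿ` and let `ℓ = ⟪u, ·⟫` attain its minimum `b` and maximum `B` on `K` at `x₀` and `x₁`.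
All partial derivatives of `ℓ - b` are constant, so `∂^α (ℓ - b)^m` vanishes at `x₀` unless
`|α| = m`; evaluating `T (ℓ - b)^m ≥ 0` at `x₀` gives `m! σ_m(u) ≥ 0`, where
`σ_m(u) = ∑_{|α| = m} c_α u^α`. So `σ_m ≥ 0`, and for odd `m` also `σ_m` is odd, hence zero.
For even `m ≥ 2`, `(ℓ - b)^(m-1) (B - ℓ) ≥ 0` on `K`, and at `x₀` its image is `-m! σ_m(u)`
because `σ_(m-1) = 0`. So `σ_m = 0` for every `m ≥ 1`, which kills all `c_α` with `α ≠ 0`,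
while `σ_0 = c_0 ≥ 0`.
-/

section IteratedPartialDerivatives

variable {σ R : Type*} [CommSemiring R]

lemma pow_pderiv_apply_pow {p : MvPolynomial σ R} {i : σ} {r : R} (hp : pderiv i p = C r)
    (t m : ℕ) :
    (((pderiv i).toLinearMap : Module.End R (MvPolynomial σ R)) ^ t) (p ^ m) =
      ((m.descFactorial t : R) * r ^ t) • p ^ (m - t) := by
  induction t with
  | zero => simp
  | succ t ih =>
    rw [pow_succ', Module.End.mul_apply, ih]
    change pderiv i _ = _
    rw [Derivation.map_smul, pderiv_pow, hp, Nat.sub_sub, Nat.descFactorial_succ,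
      smul_eq_C_mul, smul_eq_C_mul, ← map_natCast (C : R →+* _)]
    push_cast
    simp only [C_mul, C_pow]
    ring

lemma list_prod_pow_pderiv_apply_pow {p : MvPolynomial σ R} {u : σ → R}
    (hp : ∀ i, pderiv i p = C (u i)) (e : σ → ℕ) (m : ℕ) (l : List σ) :
    (l.map fun i => ((pderiv i).toLinearMap : Module.End R (MvPolynomial σ R)) ^ e i).prod
        (p ^ m) =
      ((m.descFactorial (l.map e).sum : R) * (l.map fun i => u i ^ e i).prod) •
        p ^ (m - (l.map e).sum) := by
  induction l with
  | nil => simp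
  | cons i l ih =>
    rw [List.map_cons, List.prod_cons, Module.End.mul_apply, ih, _root_.map_smul,
      pow_pderiv_apply_pow (hp i), smul_smul, List.map_cons, List.map_cons, List.sum_cons,
      List.prod_cons, Nat.sub_sub, ← Nat.descFactorial_mul_descFactorial (Nat.le_add_left _ _),
      Nat.add_sub_cancel, add_comm (e i)]
    push_cast
    ring_nf

end IteratedPartialDerivatives

variable {n : ℕ}

section ConstantPartials

variable {p : MvPolynomial (Fin n) ℝ} {u : Fin n → ℝ}

lemma pd_pow_of_pderiv_eq_C (hp : ∀ i, pderiv i p = C (u i)) (α : Fin n →₀ ℕ) (m : ℕ) :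
    pd n α (p ^ m) =
      ((m.descFactorial α.degree : ℝ) * ∏ i, u i ^ α i) • p ^ (m - α.degree) := by
  rw [pd, List.ofFn_eq_map, list_prod_pow_pderiv_apply_pow hp, ← Fin.sum_univ_def,
    ← Fin.prod_univ_def, ← Finsupp.degree_eq_sum]

lemma support_pd_pow_subset (hp : ∀ i, pderiv i p = C (u i)) (m : ℕ) :
    (Function.support fun α => pd n α (p ^ m)) ⊆ {α | α.degree ≤ m} := by
  intro α hα
  by_contra h
  refine hα ?_
  change pd n α (p ^ m) = 0
  rw [pd_pow_of_pderiv_eq_C hp, Nat.descFactorial_eq_zero_iff_lt.2 (not_le.1 h)]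
  simp

lemma finite_support_pd_pow (hp : ∀ i, pderiv i p = C (u i)) (m : ℕ) :
    (Function.support fun α => pd n α (p ^ m)).Finite :=
  (Finsupp.finite_of_degree_le m).subset (support_pd_pow_subset hp m)

lemma eval_pd_pow_of_eval_eq_zero (hp : ∀ i, pderiv i p = C (u i)) {x : Fin n → ℝ}
    (hx : eval x p = 0) (α : Fin n →₀ ℕ) (m : ℕ) :
    eval x (pd n α (p ^ m)) =
      if α.degree = m then (m.factorial : ℝ) * ∏ i, u i ^ α i else 0 := by
  rw [pd_pow_of_pderiv_eq_C hp, smul_eval, map_pow, hx]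
  split_ifs with h
  · simp [h, Nat.descFactorial_self]
  · rcases lt_or_gt_of_ne h with h | h
    · simp [Nat.sub_ne_zero_of_lt h]
    · simp [Nat.descFactorial_eq_zero_iff_lt.2 h]

end ConstantPartials

noncomputable def diffOp (c : (Fin n →₀ ℕ) → ℝ) (f : MvPolynomial (Fin n) ℝ) :
    MvPolynomial (Fin n) ℝ :=
  ∑ᶠ α, c α • pd n α f

lemma diffOp_smul_sub (c : (Fin n →₀ ℕ) → ℝ) {f g : MvPolynomial (Fin n) ℝ}
    (hf : (Function.support fun α => pd n α f).Finite)
    (hg : (Function.support fun α => pd n α g).Finite) (a : ℝ) :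
    diffOp c (a • f - g) = a • diffOp c f - diffOp c g := by
  have hcf : (Function.support fun α => c α • pd n α f).Finite :=
    hf.subset (Function.support_smul_subset_right c _)
  have hcg : (Function.support fun α => c α • pd n α g).Finite :=
    hg.subset (Function.support_smul_subset_right c _)
  have hacf : (Function.support fun α => a • (c α • pd n α f)).Finite :=
    hcf.subset (Function.support_const_smul_subset a _)
  simp only [diffOp, map_sub, _root_.map_smul, smul_sub, smul_comm (c _) a]
  rw [finsum_sub_distrib hacf hcg, smul_finsum' a hcf]

/-- The degree-`m` homogeneous part of the symbol `∑ c_α ξ^α` of `diffOp c`. -/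
noncomputable def symbolComponent (c : (Fin n →₀ ℕ) → ℝ) (m : ℕ) : MvPolynomial (Fin n) ℝ :=
  ∑ α ∈ (Finsupp.finite_of_degree_eq m).toFinset, monomial α (c α)

lemma coeff_symbolComponent (c : (Fin n →₀ ℕ) → ℝ) (m : ℕ) (α : Fin n →₀ ℕ) :
    coeff α (symbolComponent c m) = if α.degree = m then c α else 0 := by
  simp [symbolComponent, coeff_sum, coeff_monomial]

lemma symbolComponent_zero (c : (Fin n →₀ ℕ) → ℝ) : symbolComponent c 0 = C (c 0) := by
  ext α
  by_cases h : α = 0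
  · simp [h, coeff_symbolComponent]
  · simp [coeff_symbolComponent, coeff_C, h, Ne.symm h, Finsupp.degree_eq_zero_iff]

lemma eval_symbolComponent (c : (Fin n →₀ ℕ) → ℝ) (m : ℕ) (u : Fin n → ℝ) :
    eval u (symbolComponent c m) =
      ∑ α ∈ (Finsupp.finite_of_degree_eq m).toFinset, c α * ∏ i, u i ^ α i := by
  simp [symbolComponent, eval_monomial, Finsupp.prod_pow]

lemma eval_neg_symbolComponent (c : (Fin n →₀ ℕ) → ℝ) (m : ℕ) (u : Fin n → ℝ) :
    eval (-u) (symbolComponent c m) = (-1) ^ m * eval u (symbolComponent c m) := by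
  rw [eval_symbolComponent, eval_symbolComponent, Finset.mul_sum]
  refine Finset.sum_congr rfl fun α hα => ?_
  rw [Set.Finite.mem_toFinset, Set.mem_ofPred_eq, Finsupp.degree_eq_sum] at hα
  have hneg : ∀ i, (-u) i ^ α i = (-1) ^ α i * u i ^ α i := fun i => by rw [Pi.neg_apply, neg_pow]
  rw [Finset.prod_congr rfl fun i _ => hneg i, Finset.prod_mul_distrib,
    Finset.prod_pow_eq_pow_sum, hα]
  ring

lemma eval_diffOp_pow_of_eval_eq_zero (c : (Fin n →₀ ℕ) → ℝ) {p : MvPolynomial (Fin n) ℝ}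
    {u : Fin n → ℝ} (hp : ∀ i, pderiv i p = C (u i)) {x : Fin n → ℝ} (hx : eval x p = 0)
    (m : ℕ) : eval x (diffOp c (p ^ m)) = m.factorial * eval u (symbolComponent c m) := by
  have hfin : (Function.support fun α => c α • pd n α (p ^ m)).Finite :=
    (finite_support_pd_pow hp m).subset (Function.support_smul_subset_right c _)
  rw [diffOp, map_finsum (eval x) hfin]
  simp only [smul_eval, eval_pd_pow_of_eval_eq_zero hp hx]
  rw [finsum_eq_sum_of_support_subset _ (s := (Finsupp.finite_of_degree_eq m).toFinset),
    eval_symbolComponent, Finset.mul_sum]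
  · refine Finset.sum_congr rfl fun α hα => ?_
    rw [Set.Finite.mem_toFinset, Set.mem_ofPred_eq] at hα
    rw [if_pos hα]
    ring
  · intro α hα
    by_contra h
    simp_all

noncomputable def affineForm (u : Fin n → ℝ) (b : ℝ) : MvPolynomial (Fin n) ℝ :=
  ∑ i, C (u i) * X i - C b

lemma pderiv_affineForm (u : Fin n → ℝ) (b : ℝ) (i : Fin n) :
    pderiv i (affineForm u b) = C (u i) := by
  classical
  simp [affineForm, Pi.single_apply]

lemma eval_affineForm (u : Fin n → ℝ) (b : ℝ) (x : Fin n → ℝ) :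
    eval x (affineForm u b) = u ⬝ᵥ x - b := by
  simp [affineForm, dotProduct]

section Preserver

variable {K : Set (Fin n → ℝ)} {c : (Fin n →₀ ℕ) → ℝ}

lemma eval_symbolComponent_nonneg (hK : IsCompact K) (hKne : K.Nonempty)
    (hT : ∀ f ∈ PosOn n K, diffOp c f ∈ PosOn n K) (m : ℕ) (u : Fin n → ℝ) :
    0 ≤ eval u (symbolComponent c m) := by
  obtain ⟨x₀, hx₀K, hx₀⟩ := hK.exists_isMinOn hKne (f := (u ⬝ᵥ ·)) (by fun_prop)
  set p := affineForm u (u ⬝ᵥ x₀)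
  have hpK : p ^ m ∈ PosOn n K := fun x hx => by
    rw [map_pow, eval_affineForm]
    exact pow_nonneg (sub_nonneg.2 (isMinOn_iff.1 hx₀ x hx)) m
  have h := hT _ hpK x₀ hx₀K
  rw [eval_diffOp_pow_of_eval_eq_zero c (pderiv_affineForm u _)
    (by rw [eval_affineForm, sub_self])] at h
  exact nonneg_of_mul_nonneg_right h (by positivity)

lemma eval_symbolComponent_succ_nonpos (hK : IsCompact K) (hKne : K.Nonempty)
    (hT : ∀ f ∈ PosOn n K, diffOp c f ∈ PosOn n K) {m : ℕ} {u : Fin n → ℝ}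
    (hm : eval u (symbolComponent c m) = 0) : eval u (symbolComponent c (m + 1)) ≤ 0 := by
  obtain ⟨x₀, hx₀K, hx₀⟩ := hK.exists_isMinOn hKne (f := (u ⬝ᵥ ·)) (by fun_prop)
  obtain ⟨x₁, -, hx₁⟩ := hK.exists_isMaxOn hKne (f := (u ⬝ᵥ ·)) (by fun_prop)
  set p := affineForm u (u ⬝ᵥ x₀)
  have hp := pderiv_affineForm u (u ⬝ᵥ x₀)
  have hfK : (u ⬝ᵥ x₁ - u ⬝ᵥ x₀) • p ^ m - p ^ (m + 1) ∈ PosOn n K := fun x hx => by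
    have h₀ : 0 ≤ u ⬝ᵥ x - u ⬝ᵥ x₀ := sub_nonneg.2 (isMinOn_iff.1 hx₀ x hx)
    have h₁ : u ⬝ᵥ x ≤ u ⬝ᵥ x₁ := isMaxOn_iff.1 hx₁ x hx
    rw [map_sub, smul_eval, map_pow, map_pow, eval_affineForm, pow_succ]
    linear_combination mul_nonneg (pow_nonneg h₀ m) (sub_nonneg.2 h₁)
  have h := hT _ hfK x₀ hx₀K
  have hx₀p : eval x₀ p = 0 := by rw [eval_affineForm, sub_self]
  rw [diffOp_smul_sub c (finite_support_pd_pow hp m) (finite_support_pd_pow hp (m + 1)), map_sub,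
    smul_eval, eval_diffOp_pow_of_eval_eq_zero c hp hx₀p,
    eval_diffOp_pow_of_eval_eq_zero c hp hx₀p, hm, mul_zero, mul_zero, zero_sub,
    neg_nonneg] at h
  exact nonpos_of_mul_nonpos_right h (by positivity)

lemma symbolComponent_eq_zero_of_odd (hK : IsCompact K) (hKne : K.Nonempty)
    (hT : ∀ f ∈ PosOn n K, diffOp c f ∈ PosOn n K) {m : ℕ} (hm : Odd m) :
    symbolComponent c m = 0 :=
  MvPolynomial.funext fun u => by
    have h := eval_symbolComponent_nonneg hK hKne hT m (-u)
    rw [eval_neg_symbolComponent, hm.neg_one_pow] at h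
    linarith [eval_symbolComponent_nonneg hK hKne hT m u, map_zero (eval u)]

lemma symbolComponent_eq_zero (hK : IsCompact K) (hKne : K.Nonempty)
    (hT : ∀ f ∈ PosOn n K, diffOp c f ∈ PosOn n K) {m : ℕ} (hm : m ≠ 0) :
    symbolComponent c m = 0 := by
  obtain ⟨k, rfl⟩ := Nat.exists_eq_add_one_of_ne_zero hm
  rcases Nat.even_or_odd k with hk | hk
  · exact symbolComponent_eq_zero_of_odd hK hKne hT hk.add_one
  · refine MvPolynomial.funext fun u => le_antisymm ?_ ?_ <;> rw [map_zero]
    · exact eval_symbolComponent_succ_nonpos hK hKne hT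
        (by rw [symbolComponent_eq_zero_of_odd hK hKne hT hk, map_zero])
    · exact eval_symbolComponent_nonneg hK hKne hT _ u

end Preserver

theorem stmt9_general (n : ℕ) (K : Set (Fin n → ℝ)) (hKne : K.Nonempty)
    (hKcomp : IsCompact K) (c : (Fin n →₀ ℕ) → ℝ)
    (hpres : ∀ f ∈ PosOn n K,
      (∑ᶠ α : Fin n →₀ ℕ, c α • pd n α f) ∈ PosOn n K) :
    0 ≤ c 0 ∧ ∀ α : Fin n →₀ ℕ, α ≠ 0 → c α = 0 := by
  refine ⟨?_, fun α hα => ?_⟩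
  · simpa [symbolComponent_zero] using eval_symbolComponent_nonneg hKcomp hKne hpres 0 0
  · have h := congrArg (coeff α)
      (symbolComponent_eq_zero hKcomp hKne hpres ((Finsupp.degree_eq_zero_iff α).not.2 hα))
    simpa [coeff_symbolComponent] using h

/-- Corollary `compactK`: on a nonempty compact `K`, every
constant-coefficient `K`-positivity preserver `T = Σ_α c_α ∂^α` is a nonnegative multiple
of the identity: `c_0 ≥ 0` and `c_α = 0` for `α ≠ 0`. -/
theorem stmt9 (n : ℕ) (hn : 1 ≤ n) (K : Set (Fin n → ℝ)) (hKne : K.Nonempty)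
    (hKcomp : IsCompact K) (c : (Fin n →₀ ℕ) → ℝ)
    (hpres : ∀ f ∈ PosOn n K,
      (∑ᶠ α : Fin n →₀ ℕ, c α • pd n α f) ∈ PosOn n K) :
    0 ≤ c 0 ∧ ∀ α : Fin n →₀ ℕ, α ≠ 0 → c α = 0 :=
  stmt9_general n K hKne hKcomp c hpres
end

section
/- Let n ≥ 1, let C ⊆ ℝ[x₁,…,xₙ] be a nonempty convex set such that C_d := C ∩ ℝ[x₁,…,xₙ]_{≤d} is closed in ℝ[x₁,…,xₙ]_{≤d} for every d ∈ ℕ₀, and let A be a linear map on ℝ[x₁,…,xₙ] with A(ℝ[x₁,…,xₙ]_{≤d}) ⊆ ℝ[x₁,…,xₙ]_{≤d} for all d. If for every d ∈ ℕ₀ there exists ε_d > 0 such that (id + λA)(C_d) ⊆ C_d for all λ ∈ [0, ε_d), then e^{tA}C ⊆ C for all t ≥ 0. -/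
open MeasureTheory MvPolynomial Filter Topology

/-- The coefficient function of a multivariate polynomial (used to express closedness of
subsets of the finite-dimensional spaces `ℝ[x₁,…,xₙ]_{≤d}` via the coefficient topology). -/
def coeffsMap (n : ℕ) (p : MvPolynomial (Fin n) ℝ) : (Fin n →₀ ℕ) → ℝ :=
  fun β => MvPolynomial.coeff β p

/-!
For `t ≥ 0`, `e^{tA}` on `ℝ[x]_{≤d}` is the limit of `(1 + (t/k)A)^k`, and for large `k` the
factor `1 + (t/k)A` maps `C_d` into itself; as `C_d` is closed, so does the limit. The limit
`(1 + x/k)^k → exp x` holds in every real Banach algebra by Tannery's theorem applied to the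
binomial expansion, whose coefficients `C(k,j)/k^j` are bounded by, and converge to, `1/j!`.
-/

open NormedSpace
open scoped Nat

section BanachAlgebra

variable {𝔸 : Type*} [NormedRing 𝔸] [NormedAlgebra ℝ 𝔸]

theorem one_add_smul_pow_eq_tsum (c : ℝ) (x : 𝔸) (k : ℕ) :
    (1 + c • x) ^ k = ∑' j, ((k.choose j : ℝ) * c ^ j) • x ^ j := by
  rw [tsum_eq_sum (s := Finset.range (k + 1)) fun j hj => by
    rw [Nat.choose_eq_zero_of_lt (by simpa using hj)]; simp]
  rw [add_comm, (Commute.one_right (c • x)).add_pow]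
  refine Finset.sum_congr rfl fun j _ => ?_
  rw [one_pow, mul_one, smul_pow, ← Nat.cast_comm, ← nsmul_eq_mul, ← Nat.cast_smul_eq_nsmul ℝ,
    smul_smul]

theorem tendsto_one_add_inv_smul_pow_exp [CompleteSpace 𝔸] (x : 𝔸) :
    Tendsto (fun k : ℕ => (1 + (k : ℝ)⁻¹ • x) ^ k) atTop (𝓝 (exp x)) := by
  simp_rw [one_add_smul_pow_eq_tsum, ← (exp_series_hasSum_exp' (𝕂 := ℝ) x).tsum_eq]
  refine tendsto_tsum_of_dominated_convergence (norm_expSeries_summable' (𝕂 := ℝ) x)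
    (fun j => ?_) (Eventually.of_forall fun k j => ?_)
  · have hk : Tendsto (fun k : ℕ => (k : ℝ) * (k : ℝ)⁻¹) atTop (𝓝 1) :=
      tendsto_const_nhds.congr' <| (eventually_ne_atTop 0).mono fun k hk =>
        (mul_inv_cancel₀ (Nat.cast_ne_zero.2 hk)).symm
    simpa [div_eq_inv_mul] using
      (ProbabilityTheory.tendsto_choose_mul_pow_atTop j hk).smul_const (x ^ j)
  · rw [norm_smul, norm_smul]
    gcongr
    rw [Real.norm_of_nonneg (by positivity), Real.norm_of_nonneg (by positivity)]
    calc (k.choose j : ℝ) * (k : ℝ)⁻¹ ^ j ≤ (k : ℝ) ^ j / j ! * (k : ℝ)⁻¹ ^ j := by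
          gcongr; exact Nat.choose_le_pow_div j k
      _ = ((k : ℝ) * (k : ℝ)⁻¹) ^ j / j ! := by ring
      _ ≤ (j ! : ℝ)⁻¹ := by
          rw [div_eq_mul_inv]
          refine mul_le_of_le_one_left (by positivity) (pow_le_one₀ (by positivity) ?_)
          exact mul_inv_le_one

end BanachAlgebra

theorem Matrix.tendsto_one_add_inv_smul_pow_exp {ι : Type*} [Fintype ι] [DecidableEq ι]
    (X : Matrix ι ι ℝ) :
    Tendsto (fun k : ℕ => (1 + (k : ℝ)⁻¹ • X) ^ k) atTop (𝓝 (exp X)) := by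
  let := Matrix.linftyOpNormedRing (n := ι) (α := ℝ)
  let := Matrix.linftyOpNormedAlgebra (n := ι) (R := ℝ) (α := ℝ)
  have : CompleteSpace (Matrix ι ι ℝ) := FiniteDimensional.complete ℝ _
  exact _root_.tendsto_one_add_inv_smul_pow_exp X

section FiniteDimensional

variable {M W : Type*} [AddCommGroup M] [Module ℝ M] [FiniteDimensional ℝ M]
  [AddCommGroup W] [Module ℝ W] [TopologicalSpace W] [IsTopologicalAddGroup W]
  [ContinuousSMul ℝ W]

theorem tendsto_one_add_inv_smul_pow_apply_expEnd (f : Module.End ℝ M) (v : M)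
    (L : M →ₗ[ℝ] W) :
    Tendsto (fun k : ℕ => L (((1 + (k : ℝ)⁻¹ • f) ^ k) v)) atTop (𝓝 (L (expEnd f v))) := by
  let : DecidableEq (Module.Basis.ofVectorSpaceIndex ℝ M) := Classical.decEq _
  let b := Module.Basis.ofVectorSpace ℝ M
  let Φ := Matrix.toLinAlgEquiv b
  have hf : Φ (LinearMap.toMatrix b b f) = f := Matrix.toLin_toMatrix b b f
  have hcont : Continuous (L ∘ₗ LinearMap.applyₗ v ∘ₗ Φ.toLinearMap) :=
    LinearMap.continuous_of_finiteDimensional _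
  convert (hcont.tendsto _).comp
    (Matrix.tendsto_one_add_inv_smul_pow_exp (LinearMap.toMatrix b b f)) using 2 with k
  · simp [Φ, hf]
  · rfl

theorem expEnd_mapsTo_of_one_add_smul_mapsTo (L : M →ₗ[ℝ] W) (hL : Function.Injective L)
    {S : Set M} (hS : IsClosed (L '' S)) (f : Module.End ℝ M) {ε : ℝ} (hε : 0 < ε)
    (hf : ∀ c : ℝ, 0 ≤ c → c < ε → Set.MapsTo ⇑(1 + c • f) S S) {t : ℝ} (ht : 0 ≤ t) :
    Set.MapsTo (expEnd (t • f)) S S := by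
  intro v hv
  have hsmall : ∀ᶠ k : ℕ in atTop, (k : ℝ)⁻¹ * t < ε := by
    refine Tendsto.eventually_lt_const hε ?_
    simpa using (tendsto_inv_atTop_nhds_zero_nat (𝕜 := ℝ)).mul_const t
  have hmem : ∀ᶠ k : ℕ in atTop, L (((1 + (k : ℝ)⁻¹ • (t • f)) ^ k) v) ∈ L '' S := by
    filter_upwards [hsmall] with k hk
    rw [smul_smul, Module.End.coe_pow]
    exact Set.mem_image_of_mem L ((hf _ (by positivity) hk).iterate k hv)
  obtain ⟨w, hw, hLw⟩ :=
    hS.mem_of_tendsto (tendsto_one_add_inv_smul_pow_apply_expEnd (t • f) v L) hmem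
  exact hL hLw ▸ hw

end FiniteDimensional

theorem stmt14_general (n : ℕ) (C : Set (MvPolynomial (Fin n) ℝ))
    (hCcl : ∀ d : ℕ, IsClosed (coeffsMap n ''
      (C ∩ (MvPolynomial.restrictTotalDegree (Fin n) ℝ d : Set (MvPolynomial (Fin n) ℝ)))))
    (A : MvPolynomial (Fin n) ℝ →ₗ[ℝ] MvPolynomial (Fin n) ℝ)
    (hAfil : ∀ d : ℕ, ∀ p ∈ MvPolynomial.restrictTotalDegree (Fin n) ℝ d,
      A p ∈ MvPolynomial.restrictTotalDegree (Fin n) ℝ d)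
    (hres : ∀ d : ℕ, ∃ ε : ℝ, 0 < ε ∧ ∀ lam : ℝ, 0 ≤ lam → lam < ε →
      ∀ p ∈ MvPolynomial.restrictTotalDegree (Fin n) ℝ d, p ∈ C → p + lam • A p ∈ C) :
    ∀ t : ℝ, 0 ≤ t → ∀ d : ℕ, ∀ p : MvPolynomial (Fin n) ℝ,
      ∀ hp : p ∈ MvPolynomial.restrictTotalDegree (Fin n) ℝ d, p ∈ C →
        ((expEnd (t • (A.restrict (hAfil d))) ⟨p, hp⟩ :
          MvPolynomial.restrictTotalDegree (Fin n) ℝ d) : MvPolynomial (Fin n) ℝ) ∈ C := by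
  intro t ht d p hp hpC
  obtain ⟨ε, hε, hεC⟩ := hres d
  set V := restrictTotalDegree (Fin n) ℝ d
  let L : V →ₗ[ℝ] (Fin n →₀ ℕ) → ℝ := LinearMap.pi fun β => (lcoeff ℝ β).comp V.subtype
  have hL : Function.Injective L := fun v w h =>
    Subtype.ext <| MvPolynomial.ext _ _ fun β => congrFun h β
  have hLC : L '' (Subtype.val ⁻¹' C) = coeffsMap n '' (C ∩ V) := by
    rw [Set.inter_comm, ← Subtype.image_preimage_coe, Set.image_image]
    rfl
  have hS : IsClosed (L '' (Subtype.val ⁻¹' C)) := hLC ▸ hCcl d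
  have hB : ∀ c : ℝ, 0 ≤ c → c < ε →
      Set.MapsTo ⇑(1 + c • A.restrict (hAfil d)) (Subtype.val ⁻¹' C) (Subtype.val ⁻¹' C) :=
    fun c hc0 hcε w hw => hεC c hc0 hcε w w.2 hw
  exact expEnd_mapsTo_of_one_add_smul_mapsTo L hL hS _ hε hB ht hpC

/-- Proposition `1plusAd`: if for every `d` there is `ε_d > 0` with
`(id + λA)(C_d) ⊆ C_d` for all `λ ∈ [0, ε_d)`, then `e^{tA}C ⊆ C` for all `t ≥ 0`. -/
theorem stmt14 (n : ℕ) (hn : 1 ≤ n) (C : Set (MvPolynomial (Fin n) ℝ)) (hCne : C.Nonempty)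
    (hCconv : Convex ℝ C)
    (hCcl : ∀ d : ℕ, IsClosed (coeffsMap n ''
      (C ∩ (MvPolynomial.restrictTotalDegree (Fin n) ℝ d : Set (MvPolynomial (Fin n) ℝ)))))
    (A : MvPolynomial (Fin n) ℝ →ₗ[ℝ] MvPolynomial (Fin n) ℝ)
    (hAfil : ∀ d : ℕ, ∀ p ∈ MvPolynomial.restrictTotalDegree (Fin n) ℝ d,
      A p ∈ MvPolynomial.restrictTotalDegree (Fin n) ℝ d)
    (hres : ∀ d : ℕ, ∃ ε : ℝ, 0 < ε ∧ ∀ lam : ℝ, 0 ≤ lam → lam < ε →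
      ∀ p ∈ MvPolynomial.restrictTotalDegree (Fin n) ℝ d, p ∈ C → p + lam • A p ∈ C) :
    ∀ t : ℝ, 0 ≤ t → ∀ d : ℕ, ∀ p : MvPolynomial (Fin n) ℝ,
      ∀ hp : p ∈ MvPolynomial.restrictTotalDegree (Fin n) ℝ d, p ∈ C →
        ((expEnd (t • (A.restrict (hAfil d))) ⟨p, hp⟩ :
          MvPolynomial.restrictTotalDegree (Fin n) ℝ d) : MvPolynomial (Fin n) ℝ) ∈ C :=
  stmt14_general n C hCcl A hAfil hres
end

section
/- Let n ≥ 1, let K ⊆ ℝⁿ be a nonempty closed set, and let A = Σ_α (a_α/α!)·∂^α be a linear map on ℝ[x₁,…,xₙ] with a_α ∈ ℝ[x₁,…,xₙ] and deg a_α ≤ |α| for all α ∈ ℕ₀ⁿ. For y ∈ ℝⁿ let A_y := Σ_α (a_α(y)/α!)·∂^α be the constant-coefficient operator obtained by evaluating the coefficients at y. If for every y ∈ K and every t ≥ 0 the operator e^{tA_y} maps Pos(K) into Pos(K), then e^{tA} maps Pos(K) into Pos(K) for every t ≥ 0. -/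
open MeasureTheory MvPolynomial Filter Topology

/-!
Evaluating the coefficients at the point of evaluation gives `(A c)(y) = (A_y c)(y)`, and
differentiating `t ↦ (e^{tA_y} c)(y)` at `t = 0` shows that `A` obeys a minimum principle on `K`:
if `c ≥ 0` on `K` and `c(y) = 0` for some `y ∈ K`, then `(A c)(y) ≥ 0`.
Since `A` preserves degrees, `u(t) = e^{tA} p` (with `deg p ≤ d`) solves `u' = A u`. Choose `M`
with `A W ≤ M W` for the barrier `W = (1 + |x|²)^{d+1}` and perturb `u` to
`v = u + ε e^{(M+1)t} W`. Because `W` outgrows `u`, the set where `v ≤ 0` in `[0, t] × K` is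
compact. At a first time `s` where `v(s, x) = 0` for some `x ∈ K`, the minimum principle makes
`∂ₛ v(s, x)` positive, which is impossible. Hence `v > 0`, and letting `ε → 0` gives
`u(t) ≥ 0` on `K`.
-/

open Set

section ExpEnd

variable {M : Type*} [AddCommGroup M] [Module ℝ M] [FiniteDimensional ℝ M]

attribute [local instance] Matrix.linftyOpNormedRing Matrix.linftyOpNormedAlgebra

@[simp]
theorem expEnd_zero : expEnd (0 : M →ₗ[ℝ] M) = LinearMap.id := by
  let : DecidableEq (Module.Basis.ofVectorSpaceIndex ℝ M) := Classical.decEq _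
  rw [expEnd, map_zero, NormedSpace.exp_zero, Matrix.toLin_one]

theorem hasDerivAt_expEnd (f : M →ₗ[ℝ] M) (v : M) (φ : M →ₗ[ℝ] ℝ) (t : ℝ) :
    HasDerivAt (fun s : ℝ => φ (expEnd (s • f) v)) (φ (f (expEnd (t • f) v))) t := by
  let : DecidableEq (Module.Basis.ofVectorSpaceIndex ℝ M) := Classical.decEq _
  set b := Module.Basis.ofVectorSpace ℝ M
  set X := LinearMap.toMatrix b b f
  let F : Matrix (Module.Basis.ofVectorSpaceIndex ℝ M) (Module.Basis.ofVectorSpaceIndex ℝ M) ℝ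
      →L[ℝ] ℝ :=
    LinearMap.toContinuousLinearMap (φ ∘ₗ LinearMap.applyₗ v ∘ₗ (Matrix.toLin b b).toLinearMap)
  have hF (Z) : F Z = φ (Matrix.toLin b b Z v) := rfl
  have hexp (s : ℝ) : expEnd (s • f) = Matrix.toLin b b (NormedSpace.exp (s • X)) := by
    rw [expEnd, map_smul]
  have hderiv : F (X * NormedSpace.exp (t • X)) = φ (f (expEnd (t • f) v)) := by
    rw [hF, Matrix.toLin_mul b b b, LinearMap.comp_apply, Matrix.toLin_toMatrix, hexp]
  rw [← hderiv]
  refine (F.hasFDerivAt.comp_hasDerivAt t (hasDerivAt_exp_smul_const' X t)).congr_of_eventuallyEq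
    (Eventually.of_forall fun s => ?_)
  rw [Function.comp_apply, hF]
  exact congrArg (fun g => φ (g v)) (hexp s)

theorem hasDerivAt_expEnd_restrict {N : Type*} [AddCommGroup N] [Module ℝ N] {V : Submodule ℝ N}
    [FiniteDimensional ℝ V] (f : N →ₗ[ℝ] N) (hf : ∀ v ∈ V, f v ∈ V) (v : V) (φ : N →ₗ[ℝ] ℝ)
    (t : ℝ) :
    HasDerivAt (fun s : ℝ => φ (expEnd (s • f.restrict hf) v))
      (φ (f (expEnd (t • f.restrict hf) v))) t :=
  hasDerivAt_expEnd (f.restrict hf) v (φ ∘ₗ V.subtype) t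

end ExpEnd

section TotalDegree

variable {σ R : Type*} [CommSemiring R]

theorem MvPolynomial.totalDegree_pderiv_add_one_le {i : σ} {p : MvPolynomial σ R}
    (h : pderiv i p ≠ 0) : (pderiv i p).totalDegree + 1 ≤ p.totalDegree := by
  classical
  obtain ⟨β, hβ, hdeg⟩ := Finset.exists_mem_eq_sup _ (support_nonempty.mpr h)
    fun s : σ →₀ ℕ => s.sum fun _ e => e
  have hmem : β + Finsupp.single i 1 ∈ p.support := by
    rw [mem_support_iff, coeff_pderiv] at hβ
    exact mem_support_iff.mpr (left_ne_zero_of_mul hβ)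
  have hle := le_totalDegree hmem
  rw [Finsupp.sum_add_index' (fun _ => rfl) (fun _ _ _ => rfl),
    Finsupp.sum_single_index rfl] at hle
  rwa [totalDegree, hdeg]

def LowersTotalDegreeBy (f : Module.End R (MvPolynomial σ R)) (k : ℕ) : Prop :=
  ∀ q, f q ≠ 0 → (f q).totalDegree + k ≤ q.totalDegree

namespace LowersTotalDegreeBy

variable {f g : Module.End R (MvPolynomial σ R)} {j k : ℕ}

theorem one : LowersTotalDegreeBy (1 : Module.End R (MvPolynomial σ R)) 0 :=
  fun _ _ => le_rfl

theorem mul (hf : LowersTotalDegreeBy f j) (hg : LowersTotalDegreeBy g k) :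
    LowersTotalDegreeBy (f * g) (j + k) := by
  intro q hfgq
  have hgq : g q ≠ 0 := fun h => hfgq (by rw [Module.End.mul_apply, h, map_zero])
  have := hf (g q) hfgq
  have := hg q hgq
  rw [Module.End.mul_apply]
  omega

theorem pow (hf : LowersTotalDegreeBy f k) (m : ℕ) : LowersTotalDegreeBy (f ^ m) (m * k) := by
  induction m with
  | zero => simpa using one
  | succ m ih => simpa [pow_succ, add_mul] using ih.mul hf

theorem list_prod {ι : Type*} (l : List ι) (f : ι → Module.End R (MvPolynomial σ R))
    (k : ι → ℕ) (h : ∀ i ∈ l, LowersTotalDegreeBy (f i) (k i)) :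
    LowersTotalDegreeBy (l.map f).prod (l.map k).sum := by
  induction l with
  | nil => exact one
  | cons i l ih =>
    simpa using (h i (by simp)).mul (ih fun j hj => h j (by simp [hj]))

end LowersTotalDegreeBy

theorem lowersTotalDegreeBy_pderiv (i : σ) :
    LowersTotalDegreeBy ((pderiv i).toLinearMap : Module.End R (MvPolynomial σ R)) 1 :=
  fun _ => totalDegree_pderiv_add_one_le

end TotalDegree

section PartialDerivatives

variable {n : ℕ}

theorem lowersTotalDegreeBy_pd (α : Fin n →₀ ℕ) : LowersTotalDegreeBy (pd n α) (∑ i, α i) := by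
  have := LowersTotalDegreeBy.list_prod (List.finRange n)
    (fun i => ((pderiv i).toLinearMap : Module.End ℝ (MvPolynomial (Fin n) ℝ)) ^ α i) α
    fun i _ => by simpa using (lowersTotalDegreeBy_pderiv i).pow (α i)
  rwa [← List.ofFn_eq_map, ← List.ofFn_eq_map, List.sum_ofFn] at this

theorem pd_eq_zero_of_totalDegree_lt {α : Fin n →₀ ℕ} {q : MvPolynomial (Fin n) ℝ}
    (h : q.totalDegree < ∑ i, α i) : pd n α q = 0 := by
  by_contra hne
  have := lowersTotalDegreeBy_pd α q hne
  omega

theorem finite_setOf_pd_ne_zero (q : MvPolynomial (Fin n) ℝ) :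
    {α : Fin n →₀ ℕ | pd n α q ≠ 0}.Finite :=
  (Finsupp.finite_of_degree_le q.totalDegree).subset fun α hα => by
    rw [Set.mem_ofPred_eq, Finsupp.degree_eq_sum]
    by_contra h
    exact hα (pd_eq_zero_of_totalDegree_lt (not_le.mp h))

theorem eval_finsum_smul_mul_pd (a : (Fin n →₀ ℕ) → MvPolynomial (Fin n) ℝ) (x : Fin n → ℝ)
    (q : MvPolynomial (Fin n) ℝ) :
    eval x (∑ᶠ α, ((mfact n α : ℝ))⁻¹ • (a α * pd n α q)) =
      eval x (∑ᶠ α, (eval x (a α) / (mfact n α : ℝ)) • pd n α q) := by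
  have hfin {F : (Fin n →₀ ℕ) → MvPolynomial (Fin n) ℝ} (hF : ∀ α, pd n α q = 0 → F α = 0) :
      eval x (∑ᶠ α, F α) = ∑ᶠ α, eval x (F α) :=
    (eval x).toAddMonoidHom.map_finsum <| (finite_setOf_pd_ne_zero q).subset
      fun α hα h => hα (hF α h)
  rw [hfin fun α h => by rw [h, mul_zero, smul_zero], hfin fun α h => by rw [h, smul_zero]]
  refine finsum_congr fun α => ?_
  simp only [smul_eq_C_mul, map_mul, eval_C]
  ring

end PartialDerivatives

theorem HasDerivAt.nonneg_of_le_right {g : ℝ → ℝ} {g' a b : ℝ} (hab : a < b)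
    (hg : HasDerivAt g g' a) (hle : ∀ s ∈ Ioo a b, g a ≤ g s) : 0 ≤ g' := by
  have hslope : Tendsto (slope g a) (𝓝[>] a) (𝓝 g') :=
    hg.tendsto_slope.mono_left (nhdsWithin_mono a fun _ hx => ne_of_gt hx)
  refine ge_of_tendsto hslope ?_
  filter_upwards [Ioo_mem_nhdsGT hab] with s hs
  rw [slope_def_field]
  exact div_nonneg (sub_nonneg.mpr (hle s hs)) (sub_nonneg.mpr hs.1.le)

theorem HasDerivAt.nonpos_of_le_left {g : ℝ → ℝ} {g' a b : ℝ} (hab : a < b)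
    (hg : HasDerivAt g g' b) (hle : ∀ s ∈ Ioo a b, g b ≤ g s) : g' ≤ 0 := by
  have hslope : Tendsto (slope g b) (𝓝[<] b) (𝓝 g') :=
    hg.tendsto_slope.mono_left (nhdsWithin_mono b fun _ hx => ne_of_lt hx)
  refine le_of_tendsto hslope ?_
  filter_upwards [Ioo_mem_nhdsLT hab] with s hs
  rw [slope_def_field]
  exact div_nonpos_of_nonneg_of_nonpos (sub_nonneg.mpr (hle s hs)) (sub_nonpos.mpr hs.2.le)

section CrossPositivity

variable {n : ℕ}

def IsCrossPositiveOn (K : Set (Fin n → ℝ))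
    (L : MvPolynomial (Fin n) ℝ →ₗ[ℝ] MvPolynomial (Fin n) ℝ) : Prop :=
  ∀ y ∈ K, ∀ c ∈ PosOn n K, eval y c = 0 → 0 ≤ eval y (L c)

theorem isCrossPositiveOn_of_expEnd_mem_posOn {K : Set (Fin n → ℝ)}
    (L : MvPolynomial (Fin n) ℝ →ₗ[ℝ] MvPolynomial (Fin n) ℝ)
    (hL : ∀ d : ℕ, ∀ p ∈ restrictTotalDegree (Fin n) ℝ d, L p ∈ restrictTotalDegree (Fin n) ℝ d)
    (hexp : ∀ t : ℝ, 0 ≤ t → ∀ d : ℕ, ∀ p : MvPolynomial (Fin n) ℝ,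
      ∀ hp : p ∈ restrictTotalDegree (Fin n) ℝ d, p ∈ PosOn n K →
        ((expEnd (t • (L.restrict (hL d))) ⟨p, hp⟩ : restrictTotalDegree (Fin n) ℝ d) :
          MvPolynomial (Fin n) ℝ) ∈ PosOn n K) :
    IsCrossPositiveOn K L := by
  intro y hy c hc hc0
  have hcd : c ∈ restrictTotalDegree (Fin n) ℝ c.totalDegree :=
    (mem_restrictTotalDegree _ _ _).mpr le_rfl
  have hderiv := hasDerivAt_expEnd_restrict L (hL _) ⟨c, hcd⟩ (aeval y).toLinearMap 0
  simp only [AlgHom.toLinearMap_apply, zero_smul, expEnd_zero, LinearMap.id_apply] at hderiv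
  refine hderiv.nonneg_of_le_right one_pos fun s hs => ?_
  simpa [hc0] using hexp s hs.1.le _ c hcd hc y hy

end CrossPositivity

theorem forall_pos_of_deriv_pos_at_first_zero {E : Type*} [NormedAddCommGroup E] [ProperSpace E]
    {K : Set E} (hK : IsClosed K) {v v' : ℝ → E → ℝ} {t : ℝ} (ht : 0 ≤ t)
    (hv : Continuous fun z : ℝ × E => v z.1 z.2)
    (hbdd : Bornology.IsBounded {x | ∃ s ∈ Icc 0 t, v s x ≤ 0})
    (hinit : ∀ x ∈ K, 0 < v 0 x)
    (hderiv : ∀ s ∈ Ioc 0 t, ∀ x ∈ K, HasDerivAt (v · x) (v' s x) s)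
    (hfirst : ∀ s ∈ Ioc 0 t, ∀ x ∈ K, (∀ y ∈ K, 0 ≤ v s y) → v s x = 0 → 0 < v' s x) :
    ∀ x ∈ K, 0 < v t x := by
  by_contra! hbad
  obtain ⟨x₁, hx₁K, hx₁⟩ := hbad
  set S : Set (ℝ × E) := {z | z.1 ∈ Icc 0 t ∧ z.2 ∈ K ∧ v z.1 z.2 ≤ 0}
  have hScompact : IsCompact S := by
    refine Metric.isCompact_of_isClosed_isBounded ?_ ?_
    · exact (isClosed_Icc.preimage continuous_fst).inter
        ((hK.preimage continuous_snd).inter (isClosed_le hv continuous_const))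
    · exact (Metric.isBounded_Icc 0 t).prod hbdd |>.subset
        fun z hz => ⟨hz.1, z.1, hz.1, hz.2.2⟩
  -- `s₀` is the first time at which `v s₀` fails to be positive on `K`
  obtain ⟨⟨s₀, x₀⟩, ⟨hs₀t, hx₀K, hv₀⟩, hmin⟩ :=
    hScompact.exists_isMinOn ⟨(t, x₁), ⟨⟨ht, le_rfl⟩, hx₁K, hx₁⟩⟩ continuous_fst.continuousOn
  have hbefore : ∀ s ∈ Ico 0 s₀, ∀ x ∈ K, 0 < v s x := by
    intro s hs x hx
    by_contra! hvs
    exact hs.2.not_ge (isMinOn_iff.mp hmin (s, x) ⟨⟨hs.1, hs.2.le.trans hs₀t.2⟩, hx, hvs⟩)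
  have hs₀ : 0 < s₀ := hs₀t.1.lt_of_ne fun h => (hinit x₀ hx₀K).not_ge (h ▸ hv₀)
  have hnonneg : ∀ y ∈ K, 0 ≤ v s₀ y := by
    intro y hy
    have hcont : Continuous (v · y) := hv.comp (continuous_id.prodMk continuous_const)
    refine ge_of_tendsto (hcont.continuousWithinAt (s := Iio s₀)) ?_
    filter_upwards [Ioo_mem_nhdsLT hs₀] with s hs
    exact (hbefore s ⟨hs.1.le, hs.2⟩ y hy).le
  have hzero : v s₀ x₀ = 0 := le_antisymm hv₀ (hnonneg x₀ hx₀K)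
  have hderiv_nonpos : v' s₀ x₀ ≤ 0 :=
    (hderiv s₀ ⟨hs₀, hs₀t.2⟩ x₀ hx₀K).nonpos_of_le_left hs₀ fun s hs =>
      hzero ▸ (hbefore s ⟨hs.1.le, hs.2⟩ x₀ hx₀K).le
  exact (hfirst s₀ ⟨hs₀, hs₀t.2⟩ x₀ hx₀K hnonneg hzero).not_ge hderiv_nonpos

section Growth

variable {ι : Type*} [Fintype ι]

theorem norm_le_sqrt_sum_sq (x : ι → ℝ) : ‖x‖ ≤ √(∑ i, x i ^ 2) :=
  (pi_norm_le_iff_of_nonneg (Real.sqrt_nonneg _)).mpr fun i => by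
    rw [Real.norm_eq_abs]
    exact Real.abs_le_sqrt
      (Finset.single_le_sum (f := fun j => x j ^ 2) (fun j _ => sq_nonneg _) (Finset.mem_univ i))

theorem abs_prod_pow_le (x : ι → ℝ) {β : ι →₀ ℕ} {m : ℕ} (hβ : β.degree ≤ 2 * m) :
    |∏ i, x i ^ β i| ≤ (1 + ∑ i, x i ^ 2) ^ m := by
  set r := √(1 + ∑ i, x i ^ 2)
  have hr : 1 ≤ r := Real.one_le_sqrt.mpr (le_add_of_nonneg_right (by positivity))
  have hxr (i : ι) : |x i| ≤ r :=
    Real.abs_le_sqrt (le_add_of_nonneg_of_le zero_le_one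
      (Finset.single_le_sum (f := fun j => x j ^ 2) (fun j _ => sq_nonneg _) (Finset.mem_univ i)))
  calc |∏ i, x i ^ β i| = ∏ i, |x i| ^ β i := by simp [Finset.abs_prod, abs_pow]
    _ ≤ ∏ i, r ^ β i :=
      Finset.prod_le_prod (fun _ _ => by positivity) fun i _ =>
        pow_le_pow_left₀ (abs_nonneg _) (hxr i) _
    _ = r ^ β.degree := by rw [Finset.prod_pow_eq_pow_sum, Finsupp.degree_eq_sum]
    _ ≤ r ^ (2 * m) := pow_le_pow_right₀ hr hβ
    _ = (1 + ∑ i, x i ^ 2) ^ m := by rw [pow_mul, Real.sq_sqrt (by positivity)]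

theorem abs_eval_le_sum_abs_coeff_mul {q : MvPolynomial ι ℝ} {S : Finset (ι →₀ ℕ)} {m : ℕ}
    (hS : q.support ⊆ S) (hq : q.totalDegree ≤ 2 * m) (x : ι → ℝ) :
    |eval x q| ≤ (∑ β ∈ S, |coeff β q|) * (1 + ∑ i, x i ^ 2) ^ m := by
  rw [eval_eq', Finset.sum_mul]
  calc |∑ β ∈ q.support, coeff β q * ∏ i, x i ^ β i|
      ≤ ∑ β ∈ q.support, |coeff β q| * (1 + ∑ i, x i ^ 2) ^ m := by
        refine (Finset.abs_sum_le_sum_abs _ _).trans (Finset.sum_le_sum fun β hβ => ?_)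
        rw [abs_mul]
        exact mul_le_mul_of_nonneg_left (abs_prod_pow_le x ((le_totalDegree hβ).trans hq))
          (abs_nonneg _)
    _ ≤ ∑ β ∈ S, |coeff β q| * (1 + ∑ i, x i ^ 2) ^ m :=
        Finset.sum_le_sum_of_subset_of_nonneg hS fun _ _ _ => by positivity

theorem support_subset_of_totalDegree_le {q : MvPolynomial ι ℝ} {d : ℕ}
    (h : q.totalDegree ≤ d) : q.support ⊆ (Finsupp.finite_of_degree_le (σ := ι) d).toFinset :=
  fun _ hβ => (Set.Finite.mem_toFinset _).mpr ((le_totalDegree hβ).trans h)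

noncomputable def barrier (ι : Type*) [Fintype ι] (m : ℕ) : MvPolynomial ι ℝ :=
  (1 + ∑ i, X i ^ 2) ^ m

@[simp]
theorem eval_barrier (m : ℕ) (x : ι → ℝ) : eval x (barrier ι m) = (1 + ∑ i, x i ^ 2) ^ m := by
  simp [barrier]

theorem totalDegree_barrier_le (m : ℕ) : (barrier ι m).totalDegree ≤ 2 * m := by
  have hbase : (1 + ∑ i, X i ^ 2 : MvPolynomial ι ℝ).totalDegree ≤ 2 := by
    refine (totalDegree_add _ _).trans (max_le (by simp) ?_)
    refine (totalDegree_finsetSum _ _).trans (Finset.sup_le fun i _ => ?_)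
    exact (totalDegree_pow _ _).trans (by simp [totalDegree_X])
  calc (barrier ι m).totalDegree ≤ m * 2 := (totalDegree_pow _ _).trans (by gcongr)
    _ = 2 * m := mul_comm m 2

theorem isBounded_setOf_add_mul_barrier_nonpos {f : ℝ → (ι → ℝ) → ℝ} {C ε L t : ℝ} {d : ℕ}
    (hε : 0 < ε) (hL : 0 ≤ L) (hf : ∀ s ∈ Icc 0 t, ∀ x, |f s x| ≤ C * (1 + ∑ i, x i ^ 2) ^ d) :
    Bornology.IsBounded
      {x | ∃ s ∈ Icc 0 t, f s x + ε * Real.exp (L * s) * (1 + ∑ i, x i ^ 2) ^ (d + 1) ≤ 0} := by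
  refine (Metric.isBounded_closedBall (x := 0) (r := √(C / ε))).subset fun x ⟨s, hs, hneg⟩ => ?_
  rw [mem_closedBall_zero_iff]
  refine (norm_le_sqrt_sum_sq x).trans (Real.sqrt_le_sqrt ?_)
  set ρ := 1 + ∑ i, x i ^ 2 with hρ
  have hexp : 1 ≤ Real.exp (L * s) := Real.one_le_exp (mul_nonneg hL hs.1)
  have hmul : ε * ρ * ρ ^ d ≤ C * ρ ^ d := calc
    ε * ρ * ρ ^ d = ε * 1 * ρ ^ (d + 1) := by ring
    _ ≤ ε * Real.exp (L * s) * ρ ^ (d + 1) := by gcongr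
    _ ≤ -f s x := by linarith
    _ ≤ |f s x| := neg_le_abs _
    _ ≤ C * ρ ^ d := hf s hs x
  have hερ := le_of_mul_le_mul_right hmul (by positivity)
  rw [le_div_iff₀ hε]
  nlinarith

end Growth

section Curves

variable {ι : Type*} [Fintype ι] {u : ℝ → MvPolynomial ι ℝ} {d : ℕ}

theorem continuous_eval_of_continuous_coeff (hdeg : ∀ s, (u s).totalDegree ≤ d)
    (hcoeff : ∀ β, Continuous fun s => coeff β (u s)) :
    Continuous fun z : ℝ × (ι → ℝ) => eval z.2 (u z.1) := by
  have hsum (z : ℝ × (ι → ℝ)) : eval z.2 (u z.1) =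
      ∑ β ∈ (Finsupp.finite_of_degree_le (σ := ι) d).toFinset,
        coeff β (u z.1) * ∏ i, z.2 i ^ β i := by
    rw [eval_eq']
    exact Finset.sum_subset (support_subset_of_totalDegree_le (hdeg _)) fun β _ hβ => by
      rw [notMem_support_iff.mp hβ, zero_mul]
  simp_rw [hsum]
  exact continuous_finsetSum _ fun β _ => ((hcoeff β).comp continuous_fst).mul
    (continuous_finsetProd _ fun i _ => ((continuous_apply i).comp continuous_snd).pow _)

theorem exists_abs_eval_le_of_continuous_coeff (hdeg : ∀ s, (u s).totalDegree ≤ d)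
    (hcoeff : ∀ β, Continuous fun s => coeff β (u s)) {T : Set ℝ} (hT : IsCompact T) :
    ∃ C, ∀ s ∈ T, ∀ x, |eval x (u s)| ≤ C * (1 + ∑ i, x i ^ 2) ^ d := by
  set S := (Finsupp.finite_of_degree_le (σ := ι) d).toFinset
  obtain ⟨C, hC⟩ := hT.exists_bound_of_continuousOn
    (continuous_finsetSum S fun β _ => (hcoeff β).abs).continuousOn
  refine ⟨C, fun s hs x => ?_⟩
  refine (abs_eval_le_sum_abs_coeff_mul (support_subset_of_totalDegree_le (hdeg s))
    ((hdeg s).trans (by omega)) x).trans (mul_le_mul_of_nonneg_right ?_ (by positivity))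
  exact (le_abs_self _).trans (hC s hs)

end Curves

section MaximumPrinciple

variable {n : ℕ} {K : Set (Fin n → ℝ)} {A : MvPolynomial (Fin n) ℝ →ₗ[ℝ] MvPolynomial (Fin n) ℝ}

theorem mem_posOn_of_hasDerivAt_eval (hK : IsClosed K)
    (hAfil : ∀ d : ℕ, ∀ p ∈ restrictTotalDegree (Fin n) ℝ d, A p ∈ restrictTotalDegree (Fin n) ℝ d)
    (hA : IsCrossPositiveOn K A) {u : ℝ → MvPolynomial (Fin n) ℝ} {d : ℕ}
    (hdeg : ∀ s, (u s).totalDegree ≤ d) (hcoeff : ∀ β, Continuous fun s => coeff β (u s))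
    (hderiv : ∀ x s, HasDerivAt (fun s => eval x (u s)) (eval x (A (u s))) s)
    (hinit : u 0 ∈ PosOn n K) {t : ℝ} (ht : 0 ≤ t) : u t ∈ PosOn n K := by
  intro x hx
  set W := barrier (Fin n) (d + 1)
  set M := ∑ β ∈ (A W).support, |coeff β (A W)|
  have hM : 0 ≤ M := by positivity
  have hAW (y : Fin n → ℝ) : eval y (A W) ≤ M * (1 + ∑ i, y i ^ 2) ^ (d + 1) := by
    have hdegAW : (A W).totalDegree ≤ 2 * (d + 1) :=
      (mem_restrictTotalDegree _ _ _).mp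
        (hAfil _ W ((mem_restrictTotalDegree _ _ _).mpr (totalDegree_barrier_le _)))
    simpa only [W, eval_barrier] using
      (le_abs_self _).trans (abs_eval_le_sum_abs_coeff_mul subset_rfl hdegAW y)
  obtain ⟨C, hC⟩ :=
    exists_abs_eval_le_of_continuous_coeff hdeg hcoeff (isCompact_Icc (a := 0) (b := t))
  have hpert (ε : ℝ) (hε : 0 < ε) : 0 < eval x (u t) + ε * Real.exp ((M + 1) * t) * eval x W := by
    rw [eval_barrier]
    refine forall_pos_of_deriv_pos_at_first_zero hK ht
      (v := fun s y => eval y (u s) + ε * Real.exp ((M + 1) * s) * (1 + ∑ i, y i ^ 2) ^ (d + 1))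
      (v' := fun s y => eval y (A (u s))
        + ε * (Real.exp ((M + 1) * s) * (M + 1)) * (1 + ∑ i, y i ^ 2) ^ (d + 1))
      ?_ (isBounded_setOf_add_mul_barrier_nonpos hε (by linarith) hC) ?_ ?_ ?_ x hx
    · exact (continuous_eval_of_continuous_coeff hdeg hcoeff).add (by fun_prop)
    · exact fun y hy => add_pos_of_nonneg_of_pos (hinit y hy) (by positivity)
    · intro s _ y _
      have hexp := ((hasDerivAt_id s).const_mul (M + 1)).exp
      exact (hderiv y s).add ((hexp.const_mul ε).mul_const _ |>.congr_deriv (by simp))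
    · intro s _ y hy hnonneg hzero
      set e := ε * Real.exp ((M + 1) * s)
      have hcross := hA y hy (u s + e • W) (fun z hz => by simpa [W] using hnonneg z hz)
        (by simpa [W] using hzero)
      rw [map_add, map_smul, map_add, smul_eq_C_mul, map_mul, eval_C] at hcross
      have hbound := mul_le_mul_of_nonneg_left (hAW y) (by positivity : 0 ≤ e)
      have hρ : 0 < e * (1 + ∑ i, y i ^ 2) ^ (d + 1) := by positivity
      show 0 < _ + ε * (Real.exp ((M + 1) * s) * (M + 1)) * _
      linear_combination hcross + hbound + hρ
  refine le_of_forall_pos_lt_add fun δ hδ => ?_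
  have hpos : 0 < Real.exp ((M + 1) * t) * eval x W := by simp only [W, eval_barrier]; positivity
  have := hpert (δ / (Real.exp ((M + 1) * t) * eval x W)) (by positivity)
  rwa [mul_assoc, div_mul_cancel₀ _ hpos.ne'] at this

end MaximumPrinciple

theorem expEnd_mem_posOn_of_isCrossPositiveOn {n : ℕ} {K : Set (Fin n → ℝ)} (hK : IsClosed K)
    (A : MvPolynomial (Fin n) ℝ →ₗ[ℝ] MvPolynomial (Fin n) ℝ)
    (hAfil : ∀ d : ℕ, ∀ p ∈ restrictTotalDegree (Fin n) ℝ d, A p ∈ restrictTotalDegree (Fin n) ℝ d)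
    (hA : IsCrossPositiveOn K A) :
    ∀ t : ℝ, 0 ≤ t → ∀ d : ℕ, ∀ p : MvPolynomial (Fin n) ℝ,
      ∀ hp : p ∈ restrictTotalDegree (Fin n) ℝ d, p ∈ PosOn n K →
        ((expEnd (t • (A.restrict (hAfil d))) ⟨p, hp⟩ : restrictTotalDegree (Fin n) ℝ d) :
          MvPolynomial (Fin n) ℝ) ∈ PosOn n K := by
  intro t ht d p hp hpK
  refine mem_posOn_of_hasDerivAt_eval hK hAfil hA (d := d)
    (u := fun s => (expEnd (s • A.restrict (hAfil d)) ⟨p, hp⟩ : MvPolynomial (Fin n) ℝ))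
    (fun s => (mem_restrictTotalDegree _ _ _).mp (Submodule.coe_mem _))
    (fun β => ?_) (fun x s => ?_) (by simpa using hpK) ht
  · exact continuous_iff_continuousAt.mpr fun s =>
      (hasDerivAt_expEnd_restrict A (hAfil d) ⟨p, hp⟩ (lcoeff ℝ β) s).continuousAt
  · simpa using hasDerivAt_expEnd_restrict A (hAfil d) ⟨p, hp⟩ (aeval x).toLinearMap s

theorem stmt16_general (n : ℕ) (K : Set (Fin n → ℝ)) (hKcl : IsClosed K)
    (a : (Fin n →₀ ℕ) → MvPolynomial (Fin n) ℝ)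
    (A : MvPolynomial (Fin n) ℝ →ₗ[ℝ] MvPolynomial (Fin n) ℝ)
    (hAdef : ∀ p : MvPolynomial (Fin n) ℝ,
      A p = ∑ᶠ α : Fin n →₀ ℕ, ((mfact n α : ℝ))⁻¹ • (a α * pd n α p))
    (hAfil : ∀ d : ℕ, ∀ p ∈ MvPolynomial.restrictTotalDegree (Fin n) ℝ d,
      A p ∈ MvPolynomial.restrictTotalDegree (Fin n) ℝ d)
    (Ay : (Fin n → ℝ) → MvPolynomial (Fin n) ℝ →ₗ[ℝ] MvPolynomial (Fin n) ℝ)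
    (hAydef : ∀ (y : Fin n → ℝ) (p : MvPolynomial (Fin n) ℝ),
      Ay y p = ∑ᶠ α : Fin n →₀ ℕ,
        (MvPolynomial.eval y (a α) / (mfact n α : ℝ)) • pd n α p)
    (hAyfil : ∀ (y : Fin n → ℝ) (d : ℕ),
      ∀ p ∈ MvPolynomial.restrictTotalDegree (Fin n) ℝ d,
        Ay y p ∈ MvPolynomial.restrictTotalDegree (Fin n) ℝ d)
    (hy : ∀ y ∈ K, ∀ t : ℝ, 0 ≤ t → ∀ d : ℕ, ∀ p : MvPolynomial (Fin n) ℝ,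
      ∀ hp : p ∈ MvPolynomial.restrictTotalDegree (Fin n) ℝ d, p ∈ PosOn n K →
        ((expEnd (t • ((Ay y).restrict (hAyfil y d))) ⟨p, hp⟩ :
          MvPolynomial.restrictTotalDegree (Fin n) ℝ d) : MvPolynomial (Fin n) ℝ)
          ∈ PosOn n K) :
    ∀ t : ℝ, 0 ≤ t → ∀ d : ℕ, ∀ p : MvPolynomial (Fin n) ℝ,
      ∀ hp : p ∈ MvPolynomial.restrictTotalDegree (Fin n) ℝ d, p ∈ PosOn n K →
        ((expEnd (t • (A.restrict (hAfil d))) ⟨p, hp⟩ :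
          MvPolynomial.restrictTotalDegree (Fin n) ℝ d) : MvPolynomial (Fin n) ℝ)
          ∈ PosOn n K := by
  refine expEnd_mem_posOn_of_isCrossPositiveOn hKcl A hAfil fun y hyK c hc hc0 => ?_
  have hAy := isCrossPositiveOn_of_expEnd_mem_posOn (Ay y) (hAyfil y) (hy y hyK) y hyK c hc hc0
  rwa [hAydef, ← eval_finsum_smul_mul_pd, ← hAdef] at hAy

/-- Theorem `genK`: let `A = Σ_α (a_α/α!)∂^α` with `deg a_α ≤ |α|`, and
for `y ∈ ℝⁿ` let `A_y = Σ_α (a_α(y)/α!)∂^α`. If for every `y ∈ K` and `t ≥ 0` the operator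
`e^{tA_y}` preserves `Pos(K)`, then `e^{tA}` preserves `Pos(K)` for all `t ≥ 0`. -/
theorem stmt16 (n : ℕ) (hn : 1 ≤ n) (K : Set (Fin n → ℝ)) (hKne : K.Nonempty)
    (hKcl : IsClosed K)
    (a : (Fin n →₀ ℕ) → MvPolynomial (Fin n) ℝ)
    (hdeg : ∀ α : Fin n →₀ ℕ, (a α).totalDegree ≤ ∑ i, α i)
    (A : MvPolynomial (Fin n) ℝ →ₗ[ℝ] MvPolynomial (Fin n) ℝ)
    (hAdef : ∀ p : MvPolynomial (Fin n) ℝ,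
      A p = ∑ᶠ α : Fin n →₀ ℕ, ((mfact n α : ℝ))⁻¹ • (a α * pd n α p))
    (hAfil : ∀ d : ℕ, ∀ p ∈ MvPolynomial.restrictTotalDegree (Fin n) ℝ d,
      A p ∈ MvPolynomial.restrictTotalDegree (Fin n) ℝ d)
    (Ay : (Fin n → ℝ) → MvPolynomial (Fin n) ℝ →ₗ[ℝ] MvPolynomial (Fin n) ℝ)
    (hAydef : ∀ (y : Fin n → ℝ) (p : MvPolynomial (Fin n) ℝ),
      Ay y p = ∑ᶠ α : Fin n →₀ ℕ,
        (MvPolynomial.eval y (a α) / (mfact n α : ℝ)) • pd n α p)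
    (hAyfil : ∀ (y : Fin n → ℝ) (d : ℕ),
      ∀ p ∈ MvPolynomial.restrictTotalDegree (Fin n) ℝ d,
        Ay y p ∈ MvPolynomial.restrictTotalDegree (Fin n) ℝ d)
    (hy : ∀ y ∈ K, ∀ t : ℝ, 0 ≤ t → ∀ d : ℕ, ∀ p : MvPolynomial (Fin n) ℝ,
      ∀ hp : p ∈ MvPolynomial.restrictTotalDegree (Fin n) ℝ d, p ∈ PosOn n K →
        ((expEnd (t • ((Ay y).restrict (hAyfil y d))) ⟨p, hp⟩ :
          MvPolynomial.restrictTotalDegree (Fin n) ℝ d) : MvPolynomial (Fin n) ℝ)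
          ∈ PosOn n K) :
    ∀ t : ℝ, 0 ≤ t → ∀ d : ℕ, ∀ p : MvPolynomial (Fin n) ℝ,
      ∀ hp : p ∈ MvPolynomial.restrictTotalDegree (Fin n) ℝ d, p ∈ PosOn n K →
        ((expEnd (t • (A.restrict (hAfil d))) ⟨p, hp⟩ :
          MvPolynomial.restrictTotalDegree (Fin n) ℝ d) : MvPolynomial (Fin n) ℝ)
          ∈ PosOn n K :=
  stmt16_general n K hKcl a A hAdef hAfil Ay hAydef hAyfil hy
end
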